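/- arXiv:2407.18774 — 5 statements merged into one kernel-verified Lean document; each statement's English description precedes it below -/
import Mathlib

section
/- Let M1 ∈ R^(p×q), M2 ∈ R^(q×q) with M2 symmetric positive semidefinite, and suppose there exists Λ such that the block matrix [[Λ, M1],[M1^T, M2]] is positive semidefinite. Then the set C = {Λ symmetric : [[Λ, M1],[M1^T, M2]] ⪰ 0} has a minimum element with respect to the Loewner order, namely Λ̄ = M1 M2^+ M1^T, where M2^+ is the Moore–Penrose pseudoinverse: Λ̄ ∈ C, and for every Λ ∈ C, Λ − Λ̄ ⪰ 0. -/
/-!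
For any `X` with `D X = Bᴴ`, the block matrix `[[A, B], [Bᴴ, D]]` is congruent, via
`[[1, 0], [-X, 1]]`, to `[[A - B X, 0], [0, D]]`; so it is positive semidefinite iff `D` and
the generalized Schur complement `A - B X` are. Positive semidefiniteness of some
`[[Λ, M₁], [M₁ᵀ, M₂]]` forces `ker M₂ ⊆ ker M₁`, hence `M₁ M₂⁺ M₂ = M₁`, so `X = (M₁ M₂⁺)ᵀ`
is such a matrix, with `M₁ X = M₁ M₂⁺ M₁ᵀ`. The theorem is then the iff read at `Λ = M₁ M₂⁺ M₁ᵀ`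
and at an arbitrary `Λ`.
-/

open Matrix

open scoped ComplexOrder

namespace Matrix

variable {𝕜 m n : Type*} [RCLike 𝕜] [Fintype m] [Fintype n]

lemma PosSemidef.fromBlocks_zero [DecidableEq m] {S : Matrix m m 𝕜} (hS : S.PosSemidef) :
    (fromBlocks S 0 0 (0 : Matrix n n 𝕜)).PosSemidef := by
  convert hS.conjTranspose_mul_mul_same (fromCols (1 : Matrix m m 𝕜) (0 : Matrix m n 𝕜)) using 1
  rw [conjTranspose_fromCols_eq_fromRows_conjTranspose, fromRows_mul, fromRows_mul_fromCols]
  simp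

lemma PosSemidef.fromBlocks_conjTranspose_mul_mul [DecidableEq n] {D : Matrix n n 𝕜}
    (hD : D.PosSemidef) (X : Matrix n m 𝕜) :
    (fromBlocks (Xᴴ * D * X) (Xᴴ * D) (D * X) D).PosSemidef := by
  convert hD.conjTranspose_mul_mul_same (fromCols X (1 : Matrix n n 𝕜)) using 1
  rw [conjTranspose_fromCols_eq_fromRows_conjTranspose, fromRows_mul, fromRows_mul_fromCols]
  simp

lemma posSemidef_fromBlocks_iff_of_mul_eq [DecidableEq m] [DecidableEq n] {A : Matrix m m 𝕜}
    {B : Matrix m n 𝕜} {D : Matrix n n 𝕜} {X : Matrix n m 𝕜} (hX : D * X = Bᴴ) :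
    (fromBlocks A B Bᴴ D).PosSemidef ↔ D.PosSemidef ∧ (A - B * X).PosSemidef := by
  constructor
  · intro h
    refine ⟨h.submatrix Sum.inr, ?_⟩
    convert h.conjTranspose_mul_mul_same (fromRows 1 (-X)) using 1
    rw [Matrix.mul_assoc, fromBlocks_mul_fromRows, conjTranspose_fromRows_eq_fromCols_conjTranspose,
      fromCols_mul_fromRows]
    simp only [hX, Matrix.mul_one, Matrix.one_mul, Matrix.mul_neg, conjTranspose_neg,
      conjTranspose_one]
    rw [add_neg_cancel, Matrix.mul_zero, add_zero, sub_eq_add_neg]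
  · rintro ⟨hD, hS⟩
    have hXD : Xᴴ * D = B := by
      rw [← hD.isHermitian.eq, ← conjTranspose_mul, hX, conjTranspose_conjTranspose]
    have hsplit : fromBlocks A B Bᴴ D =
        fromBlocks (A - B * X) 0 0 0 + fromBlocks (Xᴴ * D * X) (Xᴴ * D) (D * X) D := by
      rw [fromBlocks_add, hXD, hX, sub_add_cancel, zero_add, zero_add, zero_add]
    rw [hsplit]
    exact hS.fromBlocks_zero.add (hD.fromBlocks_conjTranspose_mul_mul X)

lemma PosSemidef.mulVec_eq_zero_of_fromBlocks {A : Matrix m m 𝕜} {B : Matrix m n 𝕜}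
    {D : Matrix n n 𝕜} (h : (fromBlocks A B Bᴴ D).PosSemidef) {x : n → 𝕜} (hx : D *ᵥ x = 0) :
    B *ᵥ x = 0 := by
  have hPx : fromBlocks A B Bᴴ D *ᵥ Sum.elim 0 x = Sum.elim (B *ᵥ x) 0 := by
    simp [fromBlocks_mulVec, hx]
  have hquad : star (Sum.elim 0 x) ⬝ᵥ fromBlocks A B Bᴴ D *ᵥ Sum.elim 0 x = 0 := by
    rw [hPx]
    simp [dotProduct, Fintype.sum_sum_type]
  have hPx0 := (h.dotProduct_mulVec_zero_iff _).mp hquad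
  rw [hPx] at hPx0
  funext i
  exact congrFun hPx0 (Sum.inl i)

lemma PosSemidef.mul_mul_eq_of_fromBlocks {A : Matrix m m 𝕜} {B : Matrix m n 𝕜}
    {D G : Matrix n n 𝕜} (h : (fromBlocks A B Bᴴ D).PosSemidef) (hG : D * G * D = D) :
    B * G * D = B := by
  refine ext_iff_mulVec.mpr fun v => ?_
  have hker : D *ᵥ (v - (G * D) *ᵥ v) = 0 := by
    rw [mulVec_sub, mulVec_mulVec, ← Matrix.mul_assoc, hG, sub_self]
  have hB := h.mulVec_eq_zero_of_fromBlocks hker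
  rw [mulVec_sub, mulVec_mulVec, sub_eq_zero] at hB
  rw [Matrix.mul_assoc, hB]

end Matrix

theorem stmt4_general {p q : ℕ} (M1 : Matrix (Fin p) (Fin q) ℝ) (M2 : Matrix (Fin q) (Fin q) ℝ)
    (M2p : Matrix (Fin q) (Fin q) ℝ)
    (hp1 : M2 * M2p * M2 = M2)
    (hex : ∃ Λ : Matrix (Fin p) (Fin p) ℝ, (fromBlocks Λ M1 M1ᵀ M2).PosSemidef) :
    (fromBlocks (M1 * M2p * M1ᵀ) M1 M1ᵀ M2).PosSemidef ∧
    ∀ Λ : Matrix (Fin p) (Fin p) ℝ, Λ.IsSymm → (fromBlocks Λ M1 M1ᵀ M2).PosSemidef →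
      (Λ - M1 * M2p * M1ᵀ).PosSemidef := by
  obtain ⟨Λ₀, hP₀⟩ := hex
  simp only [← conjTranspose_eq_transpose_of_trivial] at hP₀ ⊢
  have hM2 : M2.PosSemidef := hP₀.submatrix Sum.inr
  have hM1 : M1 * M2p * M2 = M1 := hP₀.mul_mul_eq_of_fromBlocks hp1
  set X := (M1 * M2p)ᴴ
  have hX : M2 * X = M1ᴴ := by
    rw [← hM2.isHermitian.eq, ← conjTranspose_mul, hM1]
  have hM1X : M1 * X = M1 * M2p * M1ᴴ := by
    rw [← hX, ← Matrix.mul_assoc, hM1]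
  simp only [posSemidef_fromBlocks_iff_of_mul_eq hX, hM1X, sub_self]
  exact ⟨⟨hM2, .zero⟩, fun _ _ h => h.2⟩

/-- If some `Λ` makes `[[Λ,M1],[M1ᵀ,M2]]` PSD (with `M2 ⪰ 0` symmetric), then
`Λ̄ = M1 M2⁺ M1ᵀ` is the minimum element (in the Loewner order) of the set of symmetric `Λ`
making the block matrix PSD. `M2p` is the Moore–Penrose pseudoinverse of `M2`, characterized
by the four Penrose conditions. -/
theorem stmt4 {p q : ℕ} (M1 : Matrix (Fin p) (Fin q) ℝ) (M2 : Matrix (Fin q) (Fin q) ℝ)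
    (hM2 : M2.PosSemidef)
    (M2p : Matrix (Fin q) (Fin q) ℝ)
    (hp1 : M2 * M2p * M2 = M2) (hp2 : M2p * M2 * M2p = M2p)
    (hp3 : (M2 * M2p)ᵀ = M2 * M2p) (hp4 : (M2p * M2)ᵀ = M2p * M2)
    (hex : ∃ Λ : Matrix (Fin p) (Fin p) ℝ, (fromBlocks Λ M1 M1ᵀ M2).PosSemidef) :
    (fromBlocks (M1 * M2p * M1ᵀ) M1 M1ᵀ M2).PosSemidef ∧
    ∀ Λ : Matrix (Fin p) (Fin p) ℝ, Λ.IsSymm → (fromBlocks Λ M1 M1ᵀ M2).PosSemidef →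
      (Λ - M1 * M2p * M1ᵀ).PosSemidef :=
  stmt4_general M1 M2 M2p hp1 hex
end

section
/- Let M1 ∈ R^(p×q), M2 ∈ R^(q×q) symmetric positive semidefinite with (I − M2^+ M2) M1^T = 0, and X ∈ R^(p×p) symmetric positive semidefinite. Then the infimum of tr([[0,M1],[M1^T,M2]]·[[0,U1],[U1^T,U2]]) = 2 tr(M1 U1^T) + tr(M2 U2) over all (U1,U2) such that [[X,U1],[U1^T,U2]] ⪰ 0 equals −tr(M1 M2^+ M1^T X), and is attained by U1 = −X M1 M2^+, U2 = M2^+ M1^T X M1 M2^+. -/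
/-!
Put `A = M1 M2⁺`. The range condition says `A M2 = M1`, so
`W = [[A M2 Aᵀ, M1], [M1ᵀ, M2]] = [Aᵀ, 1]ᵀ M2 [Aᵀ, 1]` is positive semidefinite, and for every
feasible `U = [[X, U1], [U1ᵀ, U2]]` the nonnegative trace `tr (U W)` is the objective plus
`tr (M1 M2⁺ M1ᵀ X)`. The bound is attained at `[1, -A]ᵀ X [1, -A]`, which is the proposed
minimiser once one knows that `M2⁺` is symmetric; that holds because the transpose of a
Moore–Penrose inverse of the symmetric `M2` is again one, and Moore–Penrose inverses are unique.
-/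

open Matrix

namespace Matrix

variable {m n R : Type*}

structure IsMoorePenroseInverse [Fintype m] [Fintype n] [Semiring R] [StarRing R]
    (A : Matrix m n R) (B : Matrix n m R) : Prop where
  mul_inv_mul : A * B * A = A
  inv_mul_inv : B * A * B = B
  mul_inv_isHermitian : (A * B).IsHermitian
  inv_mul_isHermitian : (B * A).IsHermitian

namespace IsMoorePenroseInverse

variable [Fintype m] [Fintype n] [Semiring R] [StarRing R]
  {A : Matrix m n R} {B C : Matrix n m R}

theorem conjTranspose (h : IsMoorePenroseInverse A B) : IsMoorePenroseInverse Aᴴ Bᴴ where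
  mul_inv_mul := by
    rw [← conjTranspose_mul, ← conjTranspose_mul, ← Matrix.mul_assoc, h.mul_inv_mul]
  inv_mul_inv := by
    rw [← conjTranspose_mul, ← conjTranspose_mul, ← Matrix.mul_assoc, h.inv_mul_inv]
  mul_inv_isHermitian := by
    rw [← conjTranspose_mul]; exact h.inv_mul_isHermitian.conjTranspose
  inv_mul_isHermitian := by
    rw [← conjTranspose_mul]; exact h.mul_inv_isHermitian.conjTranspose

theorem unique (hB : IsMoorePenroseInverse A B) (hC : IsMoorePenroseInverse A C) : B = C := by
  have hAB : A * B = A * C := calc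
    A * B = (A * C * A * B)ᴴ := by rw [hC.mul_inv_mul, hB.mul_inv_isHermitian.eq]
    _ = (A * B)ᴴ * (A * C)ᴴ := by simp only [conjTranspose_mul, Matrix.mul_assoc]
    _ = A * C := by
      rw [hB.mul_inv_isHermitian.eq, hC.mul_inv_isHermitian.eq, ← Matrix.mul_assoc,
        hB.mul_inv_mul]
  have hBA : B * A = C * A := calc
    B * A = (B * (A * C * A))ᴴ := by rw [hC.mul_inv_mul, hB.inv_mul_isHermitian.eq]
    _ = (C * A)ᴴ * (B * A)ᴴ := by simp only [conjTranspose_mul, Matrix.mul_assoc]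
    _ = C * A := by
      rw [hB.inv_mul_isHermitian.eq, hC.inv_mul_isHermitian.eq, Matrix.mul_assoc,
        ← Matrix.mul_assoc A, hB.mul_inv_mul]
  calc B = B * A * B := hB.inv_mul_inv.symm
    _ = C * (A * C) := by rw [hBA, Matrix.mul_assoc, hAB]
    _ = C := by rw [← Matrix.mul_assoc, hC.inv_mul_inv]

theorem isHermitian {A B : Matrix n n R} (hA : A.IsHermitian) (h : IsMoorePenroseInverse A B) :
    B.IsHermitian :=
  (hA.eq ▸ h.conjTranspose).unique h

end IsMoorePenroseInverse

theorem trace_fromBlocks [Fintype m] [Fintype n] [AddCommMonoid R] (A : Matrix m m R)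
    (B : Matrix m n R) (C : Matrix n m R) (D : Matrix n n R) :
    (fromBlocks A B C D).trace = A.trace + D.trace := by
  simp [trace, Fintype.sum_sum_type]

variable [Fintype m] [Fintype n] [DecidableEq m] [Ring R] [PartialOrder R] [StarRing R]

theorem PosSemidef.fromBlocks_self_mul {X : Matrix m m R} (hX : X.PosSemidef)
    (B : Matrix m n R) :
    (fromBlocks X (X * B) (Bᴴ * X) (Bᴴ * X * B)).PosSemidef := by
  simpa [conjTranspose_fromCols_eq_fromRows_conjTranspose, fromRows_mul, fromRows_mul_fromCols]
    using hX.conjTranspose_mul_mul_same (fromCols (1 : Matrix m m R) B)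

theorem PosSemidef.fromBlocks_mul_self {X : Matrix m m R} (hX : X.PosSemidef)
    (B : Matrix m n R) :
    (fromBlocks (Bᴴ * X * B) (Bᴴ * X) (X * B) X).PosSemidef := by
  simpa using (hX.fromBlocks_self_mul B).submatrix Sum.swap

open scoped ComplexOrder MatrixOrder in
theorem PosSemidef.trace_mul_nonneg {𝕜 : Type*} [RCLike 𝕜] {A B : Matrix n n 𝕜}
    (hA : A.PosSemidef) (hB : B.PosSemidef) : 0 ≤ (A * B).trace := by
  classical
  obtain ⟨C, rfl⟩ := CStarAlgebra.nonneg_iff_eq_star_mul_self.mp hA.nonneg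
  rw [Matrix.mul_assoc, trace_mul_comm, star_eq_conjTranspose]
  exact (hB.mul_mul_conjTranspose_same C).trace_nonneg

end Matrix

section

variable {m n : Type*} [Fintype m] [Fintype n]

/-- `tr ([[0, M1], [M1ᵀ, M2]] * [[X, U1], [U1ᵀ, U2]])`; the zero block makes it independent
of `X`. -/
def sdpObjective (M1 : Matrix m n ℝ) (M2 : Matrix n n ℝ) (U1 : Matrix m n ℝ)
    (U2 : Matrix n n ℝ) : ℝ :=
  2 * (M1 * U1ᵀ).trace + (M2 * U2).trace

variable {M1 : Matrix m n ℝ} {M2 : Matrix n n ℝ} {X : Matrix m m ℝ}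

theorem neg_trace_le_sdpObjective [DecidableEq n] {U1 : Matrix m n ℝ} {U2 : Matrix n n ℝ}
    {A : Matrix m n ℝ}
    (hU : (fromBlocks X U1 U1ᵀ U2).PosSemidef) (hM2 : M2.PosSemidef) (hA : A * M2 = M1) :
    -(M1 * Aᵀ * X).trace ≤ sdpObjective M1 M2 U1 U2 := by
  have hM2A : M2 * Aᵀ = M1ᵀ := by
    rw [← hA, transpose_mul, (isHermitian_iff_isSymm.mp hM2.isHermitian).eq]
  have hW := hM2.fromBlocks_mul_self Aᵀ
  rw [conjTranspose_eq_transpose_of_trivial, transpose_transpose, hA, hM2A] at hW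
  have h := hU.trace_mul_nonneg hW
  rw [fromBlocks_multiply, trace_fromBlocks, trace_add, trace_add] at h
  have hXM1 : (X * (M1 * Aᵀ)).trace = (M1 * Aᵀ * X).trace := trace_mul_comm _ _
  have hU1 : (U1 * M1ᵀ).trace = (M1 * U1ᵀ).trace := by
    rw [← trace_transpose, transpose_mul, transpose_transpose]
  rw [hXM1, hU1, trace_mul_comm U1ᵀ, trace_mul_comm U2] at h
  rw [sdpObjective]
  linarith

theorem sdpObjective_neg_mul_mul {P : Matrix n n ℝ} (hX : Xᵀ = X) (hP : Pᵀ = P)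
    (hPMP : P * M2 * P = P) :
    sdpObjective M1 M2 (-(X * M1 * P)) (P * M1ᵀ * X * M1 * P) =
      -(M1 * P * M1ᵀ * X).trace := by
  have h1 : M1 * (-(X * M1 * P))ᵀ = -(M1 * P * M1ᵀ * X) := by
    simp [transpose_mul, hX, hP, Matrix.mul_assoc]
  have h2 : (M2 * (P * M1ᵀ * X * M1 * P)).trace = (M1 * P * M1ᵀ * X).trace := calc
    _ = (M2 * P * M1ᵀ * X * M1 * P).trace := by simp only [Matrix.mul_assoc]
    _ = (P * M2 * P * (M1ᵀ * X * M1)).trace := by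
      rw [trace_mul_comm]; simp only [Matrix.mul_assoc]
    _ = (P * M1ᵀ * X * M1).trace := by rw [hPMP, ← Matrix.mul_assoc, ← Matrix.mul_assoc]
    _ = (M1 * P * M1ᵀ * X).trace := by
      rw [trace_mul_comm]; simp only [Matrix.mul_assoc]
  rw [sdpObjective, h1, h2, trace_neg]
  ring

end

/-- the infimum of `2 tr(M1 U1ᵀ) + tr(M2 U2)` over `(U1,U2)` with
`[[X,U1],[U1ᵀ,U2]] ⪰ 0` equals `−tr(M1 M2⁺ M1ᵀ X)`, attained at `U1 = −X M1 M2⁺`,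
`U2 = M2⁺ M1ᵀ X M1 M2⁺`. -/
theorem stmt5 {p q : ℕ} (M1 : Matrix (Fin p) (Fin q) ℝ) (M2 : Matrix (Fin q) (Fin q) ℝ)
    (hM2 : M2.PosSemidef)
    (M2p : Matrix (Fin q) (Fin q) ℝ)
    (hp1 : M2 * M2p * M2 = M2) (hp2 : M2p * M2 * M2p = M2p)
    (hp3 : (M2 * M2p)ᵀ = M2 * M2p) (hp4 : (M2p * M2)ᵀ = M2p * M2)
    (hrange : M1ᵀ - M2p * M2 * M1ᵀ = 0)
    (X : Matrix (Fin p) (Fin p) ℝ) (hX : X.PosSemidef) :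
    IsLeast {y : ℝ | ∃ (U1 : Matrix (Fin p) (Fin q) ℝ) (U2 : Matrix (Fin q) (Fin q) ℝ),
        (fromBlocks X U1 U1ᵀ U2).PosSemidef ∧
        y = 2 * (M1 * U1ᵀ).trace + (M2 * U2).trace}
      (-(M1 * M2p * M1ᵀ * X).trace) ∧
    ((fromBlocks X (-(X * M1 * M2p)) (-(X * M1 * M2p))ᵀ
        (M2p * M1ᵀ * X * M1 * M2p)).PosSemidef ∧
      2 * (M1 * (-(X * M1 * M2p))ᵀ).trace + (M2 * (M2p * M1ᵀ * X * M1 * M2p)).trace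
        = -(M1 * M2p * M1ᵀ * X).trace) := by
  have hXt : Xᵀ = X := (isHermitian_iff_isSymm.mp hX.isHermitian).eq
  have hM2p : IsMoorePenroseInverse M2 M2p := by
    refine ⟨hp1, hp2, ?_, ?_⟩ <;> rwa [isHermitian_iff_isSymm]
  have hPt : M2pᵀ = M2p := (isHermitian_iff_isSymm.mp (hM2p.isHermitian hM2.isHermitian)).eq
  have hM1 : M1 * M2p * M2 = M1 := by
    have h := congrArg transpose (sub_eq_zero.mp hrange)
    rwa [transpose_transpose, transpose_mul, hp4, ← Matrix.mul_assoc, eq_comm] at h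
  have hval := sdpObjective_neg_mul_mul (M1 := M1) hXt hPt hp2
  have hpsd : (fromBlocks X (-(X * M1 * M2p)) (-(X * M1 * M2p))ᵀ
      (M2p * M1ᵀ * X * M1 * M2p)).PosSemidef := by
    convert hX.fromBlocks_self_mul (-(M1 * M2p)) using 2 <;>
      simp [conjTranspose_eq_transpose_of_trivial, transpose_mul, hXt, hPt, Matrix.mul_assoc]
  refine ⟨⟨⟨_, _, hpsd, hval.symm⟩, ?_⟩, hpsd, hval⟩
  rintro y ⟨U1, U2, hU, rfl⟩
  simpa [sdpObjective, transpose_mul, hPt, Matrix.mul_assoc] using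
    neg_trace_le_sdpObjective hU hM2 hM1
end

section
/- Let E ∈ R^(m×n) with E ≥ 0 entrywise and let P = {(x,u) ∈ R^(n+m) : x ≥ 0, Ex − u ≥ 0, Ex + u ≥ 0}. Then the dual cone is P* = {(λ,μ) : λ = w + E^T(y+z), μ = z − y for some w,y,z ≥ 0}, and for each μ ∈ R^m, the set C_μ = {λ : (λ,μ) ∈ P*} equals {E^T|μ| + w + E^T v : w ≥ 0, v ≥ 0}; in particular C_μ has minimum element λ̄ = E^T|μ| with respect to the order induced by {λ : (λ,0) ∈ P*}. -/
open Matrix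

private lemma dot_nonneg' {k : ℕ} {a b : Fin k → ℝ} (ha : 0 ≤ a) (hb : 0 ≤ b) :
    0 ≤ a ⬝ᵥ b :=
  Finset.sum_nonneg fun i _ => mul_nonneg (ha i) (hb i)

private lemma transDot' {n m : ℕ} (E : Matrix (Fin m) (Fin n) ℝ)
    (v : Fin m → ℝ) (x : Fin n → ℝ) : (Eᵀ *ᵥ v) ⬝ᵥ x = v ⬝ᵥ (E *ᵥ x) := by
  rw [mulVec_transpose, ← dotProduct_mulVec]

private lemma mem_dual' {n m : ℕ} {E : Matrix (Fin m) (Fin n) ℝ}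
    {w : Fin n → ℝ} {y z : Fin m → ℝ} (hw : 0 ≤ w) (hy : 0 ≤ y) (hz : 0 ≤ z)
    {x : Fin n → ℝ} {u : Fin m → ℝ} (hx : 0 ≤ x) (h1 : 0 ≤ E *ᵥ x - u)
    (h2 : 0 ≤ E *ᵥ x + u) :
    0 ≤ (w + Eᵀ *ᵥ (y + z)) ⬝ᵥ x + (z - y) ⬝ᵥ u := by
  have key : (w + Eᵀ *ᵥ (y + z)) ⬝ᵥ x + (z - y) ⬝ᵥ u
      = w ⬝ᵥ x + y ⬝ᵥ (E *ᵥ x - u) + z ⬝ᵥ (E *ᵥ x + u) := by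
    rw [add_dotProduct, transDot', add_dotProduct, sub_dotProduct,
      dotProduct_sub, dotProduct_add]
    ring
  rw [key]
  have h3 := dot_nonneg' hw hx
  have h4 := dot_nonneg' hy h1
  have h5 := dot_nonneg' hz h2
  linarith

private lemma key' {n m : ℕ} {E : Matrix (Fin m) (Fin n) ℝ} (hE : ∀ i j, 0 ≤ E i j)
    (μ : Fin m → ℝ) (l : Fin n → ℝ)
    (hl : ∀ x u, 0 ≤ x → 0 ≤ E *ᵥ x - u → 0 ≤ E *ᵥ x + u → 0 ≤ l ⬝ᵥ x + μ ⬝ᵥ u) :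
    ∀ j, (Eᵀ *ᵥ fun i => |μ i|) j ≤ l j := by
  intro j
  set x : Fin n → ℝ := Pi.single j 1 with hxdef
  set u : Fin m → ℝ := fun i => if 0 ≤ μ i then -(E i j) else E i j with hudef
  have hEx : E *ᵥ x = fun i => E i j := by
    ext i
    simp [hxdef, mulVec_single]
  have hx : 0 ≤ x := by
    intro k
    simp only [hxdef, Pi.single_apply]
    split <;> norm_num
  have h1 : 0 ≤ E *ᵥ x - u := by
    intro i
    simp only [Pi.sub_apply, hEx, hudef, Pi.zero_apply]
    split <;> [linarith [hE i j]; linarith [hE i j]]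
  have h2 : 0 ≤ E *ᵥ x + u := by
    intro i
    simp only [Pi.add_apply, hEx, hudef, Pi.zero_apply]
    split <;> [linarith [hE i j]; linarith [hE i j]]
  have h := hl x u hx h1 h2
  have hlx : l ⬝ᵥ x = l j := by simp [hxdef]
  have hμu : μ ⬝ᵥ u = -((Eᵀ *ᵥ fun i => |μ i|) j) := by
    simp only [dotProduct, mulVec, transpose_apply, hudef, ← Finset.sum_neg_distrib]
    apply Finset.sum_congr rfl
    intro i _
    rcases le_or_gt 0 (μ i) with h' | h'
    · rw [if_pos h', abs_of_nonneg h']; ring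
    · rw [if_neg (not_le.2 h'), abs_of_neg h']; ring
  rw [hlx, hμu] at h
  linarith

/-- for the polyhedral cone
`P = {(x,u) : x ≥ 0, Ex − u ≥ 0, Ex + u ≥ 0}` with `E ≥ 0` entrywise:
(1) `P* = {(λ,μ) : λ = w + Eᵀ(y+z), μ = z − y, w,y,z ≥ 0}`;
(2) `C_μ = {Eᵀ|μ| + w + Eᵀv : w,v ≥ 0}`;
(3) `λ̄ = Eᵀ|μ|` is the minimum element of `C_μ`. -/
theorem stmt7 {n m : ℕ} (E : Matrix (Fin m) (Fin n) ℝ) (hE : ∀ i j, 0 ≤ E i j)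
    (P : Set ((Fin n → ℝ) × (Fin m → ℝ)))
    (hP : P = {p | 0 ≤ p.1 ∧ 0 ≤ E *ᵥ p.1 - p.2 ∧ 0 ≤ E *ᵥ p.1 + p.2}) :
    ({lm : (Fin n → ℝ) × (Fin m → ℝ) | ∀ p ∈ P, 0 ≤ lm.1 ⬝ᵥ p.1 + lm.2 ⬝ᵥ p.2}
      = {lm | ∃ (w : Fin n → ℝ) (y z : Fin m → ℝ), 0 ≤ w ∧ 0 ≤ y ∧ 0 ≤ z ∧
          lm.1 = w + Eᵀ *ᵥ (y + z) ∧ lm.2 = z - y}) ∧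
    (∀ μ : Fin m → ℝ,
      ({l : Fin n → ℝ | ∀ p ∈ P, 0 ≤ l ⬝ᵥ p.1 + μ ⬝ᵥ p.2}
        = {l | ∃ (w : Fin n → ℝ) (vm : Fin m → ℝ), 0 ≤ w ∧ 0 ≤ vm ∧
            l = Eᵀ *ᵥ (fun i => |μ i|) + w + Eᵀ *ᵥ vm}) ∧
      (∀ p ∈ P, 0 ≤ (Eᵀ *ᵥ (fun i => |μ i|)) ⬝ᵥ p.1 + μ ⬝ᵥ p.2) ∧
      (∀ l : Fin n → ℝ, (∀ p ∈ P, 0 ≤ l ⬝ᵥ p.1 + μ ⬝ᵥ p.2) →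
        ∀ p ∈ P, 0 ≤ (l - Eᵀ *ᵥ (fun i => |μ i|)) ⬝ᵥ p.1 + (0 : Fin m → ℝ) ⬝ᵥ p.2)) := by
  subst hP
  -- helper facts about y, z built from μ
  have ypos : ∀ (μ v : Fin m → ℝ), 0 ≤ v →
      (0 : Fin m → ℝ) ≤ fun i => (|μ i| + v i - μ i) / 2 := by
    intro μ v hv i
    have := abs_nonneg (μ i)
    have hvi := hv i
    simp only [Pi.zero_apply] at hvi
    have := le_abs_self (μ i)
    simp only [Pi.zero_apply]
    linarith
  have zpos : ∀ (μ v : Fin m → ℝ), 0 ≤ v →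
      (0 : Fin m → ℝ) ≤ fun i => (|μ i| + v i + μ i) / 2 := by
    intro μ v hv i
    have hvi := hv i
    simp only [Pi.zero_apply] at hvi
    have := neg_abs_le (μ i)
    simp only [Pi.zero_apply]
    linarith
  constructor
  · ext lm
    simp only [Set.mem_setOf_eq]
    constructor
    · intro h
      have hk := key' hE lm.2 lm.1 (fun x u hx h1 h2 => h (x, u) ⟨hx, h1, h2⟩)
      refine ⟨lm.1 - Eᵀ *ᵥ (fun i => |lm.2 i|),
        fun i => (|lm.2 i| + 0 - lm.2 i) / 2, fun i => (|lm.2 i| + 0 + lm.2 i) / 2,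
        fun j => sub_nonneg.2 (hk j), by simpa using ypos lm.2 0 le_rfl,
        by simpa using zpos lm.2 0 le_rfl, ?_, ?_⟩
      · have hyz : (fun i => (|lm.2 i| + 0 - lm.2 i) / 2) + (fun i => (|lm.2 i| + 0 + lm.2 i) / 2)
            = fun i => |lm.2 i| := by
          ext i; simp; ring
        rw [hyz]
        ext j; simp
      · ext i; simp; ring
    · rintro ⟨w, y, z, hw, hy, hz, h1, h2⟩ p hp
      rw [h1, h2]
      exact mem_dual' hw hy hz hp.1 hp.2.1 hp.2.2
  · intro μ
    refine ⟨?_, ?_, ?_⟩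
    · ext l
      simp only [Set.mem_setOf_eq]
      constructor
      · intro h
        have hk := key' hE μ l (fun x u hx h1 h2 => h (x, u) ⟨hx, h1, h2⟩)
        refine ⟨l - Eᵀ *ᵥ (fun i => |μ i|), 0, fun j => sub_nonneg.2 (hk j), le_rfl, ?_⟩
        ext j; simp
      · rintro ⟨w, vm, hw, hvm, rfl⟩ p hp
        set y : Fin m → ℝ := fun i => (|μ i| + vm i - μ i) / 2 with hydef
        set z : Fin m → ℝ := fun i => (|μ i| + vm i + μ i) / 2 with hzdef
        have hyz : y + z = fun i => |μ i| + vm i := by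
          ext i; simp [hydef, hzdef]; ring
        have hlm : Eᵀ *ᵥ (fun i => |μ i|) + w + Eᵀ *ᵥ vm = w + Eᵀ *ᵥ (y + z) := by
          rw [hyz]
          have : (fun i => |μ i| + vm i) = (fun i => |μ i|) + vm := rfl
          rw [this, mulVec_add]
          abel
        have hμ : μ = z - y := by
          ext i; simp [hydef, hzdef]; ring
        rw [hlm, hμ]
        exact mem_dual' hw (ypos μ vm hvm) (zpos μ vm hvm) hp.1 hp.2.1 hp.2.2
    · intro p hp
      set y : Fin m → ℝ := fun i => (|μ i| + 0 - μ i) / 2 with hydef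
      set z : Fin m → ℝ := fun i => (|μ i| + 0 + μ i) / 2 with hzdef
      have hyz : y + z = fun i => |μ i| := by
        ext i; simp [hydef, hzdef]; ring
      have hμ : μ = z - y := by
        ext i; simp [hydef, hzdef]; ring
      have h0 : Eᵀ *ᵥ (fun i => |μ i|) = (0 : Fin n → ℝ) + Eᵀ *ᵥ (y + z) := by
        rw [hyz, zero_add]
      rw [h0]
      rw [hμ]
      exact mem_dual' le_rfl (ypos μ 0 le_rfl) (zpos μ 0 le_rfl) hp.1 hp.2.1 hp.2.2
    · intro l hl p hp
      have hk := key' hE μ l (fun x u hx h1 h2 => hl (x, u) ⟨hx, h1, h2⟩)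
      have hw : (0 : Fin n → ℝ) ≤ l - Eᵀ *ᵥ (fun i => |μ i|) :=
        fun j => sub_nonneg.2 (hk j)
      rw [zero_dotProduct, add_zero]
      exact dot_nonneg' hw hp.1
end

section
/- Let P be a proper cone in R^(n+m), A ∈ R^(n×n), B ∈ R^(n×m), s ∈ R^n, r ∈ R^m with (s,r) ∈ P*, and suppose φ : R^m → R^n satisfies φ(μ)^T x = min{μ^T u : (x,u) ∈ P} for all admissible x and all μ with (η,μ) ∈ P* for some η. Define the sequence λ_0 = 0, λ_{k+1} = s + A^T λ_k + φ(r + B^T λ_k). If there exists λ* with (λ*,0) ∈ P* satisfying λ* = s + A^T λ* + φ(r + B^T λ*), then for all k, (λ* − λ_k, 0) ∈ P*, i.e., λ_k^T x ≤ λ*^T x for all (x,u) ∈ P. -/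
open Matrix

lemma tdot9 {n m : ℕ} (A : Matrix (Fin n) (Fin m) ℝ) (w : Fin n → ℝ) (x : Fin m → ℝ) :
    (Aᵀ *ᵥ w) ⬝ᵥ x = w ⬝ᵥ (A *ᵥ x) := by
  rw [dotProduct_comm, dotProduct_mulVec, vecMul_transpose, dotProduct_comm]

/-- for the value-iteration sequence `λ₀ = 0`,
`λ_{k+1} = s + Aᵀλ_k + φ(r + Bᵀλ_k)`, if `λ*` with `(λ*,0) ∈ P*` is a fixed point, then
`(λ* − λ_k, 0) ∈ P*` for all `k`. -/
theorem stmt9 {n m : ℕ} (P : Set ((Fin n → ℝ) × (Fin m → ℝ)))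
    (hconv : Convex ℝ P) (hclosed : IsClosed P)
    (hcone : ∀ (c : ℝ), 0 ≤ c → ∀ p ∈ P, c • p ∈ P)
    (hpointed : ∀ p ∈ P, -p ∈ P → p = 0)
    (hsolid : (interior P).Nonempty)
    (A : Matrix (Fin n) (Fin n) ℝ) (B : Matrix (Fin n) (Fin m) ℝ)
    (hABinv : ∀ p ∈ P, ∃ v : Fin m → ℝ, (A *ᵥ p.1 + B *ᵥ p.2, v) ∈ P)
    (s : Fin n → ℝ) (r : Fin m → ℝ)
    (hsr : ∀ p ∈ P, 0 ≤ s ⬝ᵥ p.1 + r ⬝ᵥ p.2)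
    (φ : (Fin m → ℝ) → (Fin n → ℝ))
    (hphi : ∀ (μ : Fin m → ℝ), (∃ η : Fin n → ℝ, ∀ p ∈ P, 0 ≤ η ⬝ᵥ p.1 + μ ⬝ᵥ p.2) →
      ∀ x : Fin n → ℝ, (∃ v, (x, v) ∈ P) →
        IsLeast {y : ℝ | ∃ u, (x, u) ∈ P ∧ y = μ ⬝ᵥ u} (φ μ ⬝ᵥ x))
    (lam : ℕ → (Fin n → ℝ)) (hlam0 : lam 0 = 0)
    (hlamrec : ∀ k, lam (k + 1) = s + Aᵀ *ᵥ lam k + φ (r + Bᵀ *ᵥ lam k))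
    (lstar : Fin n → ℝ)
    (hlstar : ∀ p ∈ P, 0 ≤ lstar ⬝ᵥ p.1)
    (hfix : lstar = s + Aᵀ *ᵥ lstar + φ (r + Bᵀ *ᵥ lstar)) :
    ∀ k, ∀ p ∈ P, 0 ≤ (lstar - lam k) ⬝ᵥ p.1 := by
  -- the dual pair for μ* = r + Bᵀ lstar
  have hηstar : ∀ q ∈ P, 0 ≤ (s + Aᵀ *ᵥ lstar) ⬝ᵥ q.1 + (r + Bᵀ *ᵥ lstar) ⬝ᵥ q.2 := by
    intro q hq
    obtain ⟨v, hv⟩ := hABinv q hq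
    have h1 := hsr q hq
    have h2 := hlstar _ hv
    simp only [add_dotProduct, tdot9, dotProduct_add] at *
    linarith
  have key : ∀ k, ∀ p ∈ P, 0 ≤ lam k ⬝ᵥ p.1 ∧ 0 ≤ (lstar - lam k) ⬝ᵥ p.1 := by
    intro k
    induction k with
    | zero =>
      intro p hp
      simp only [hlam0, zero_dotProduct, sub_zero, le_refl, true_and]
      exact hlstar p hp
    | succ k ih =>
      have hηk : ∀ q ∈ P, 0 ≤ (s + Aᵀ *ᵥ lam k) ⬝ᵥ q.1 + (r + Bᵀ *ᵥ lam k) ⬝ᵥ q.2 := by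
        intro q hq
        obtain ⟨v, hv⟩ := hABinv q hq
        have h1 := hsr q hq
        have h2 := (ih _ hv).1
        simp only [add_dotProduct, tdot9, dotProduct_add] at *
        linarith
      intro p hp
      obtain ⟨x, u⟩ := p
      have hx : ∃ v, (x, v) ∈ P := ⟨u, hp⟩
      have hmink := hphi (r + Bᵀ *ᵥ lam k) ⟨s + Aᵀ *ᵥ lam k, hηk⟩ x hx
      have hminstar := hphi (r + Bᵀ *ᵥ lstar) ⟨s + Aᵀ *ᵥ lstar, hηstar⟩ x hx
      -- minimizer for μ_k
      obtain ⟨uk, hukP, hukEq⟩ := hmink.1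
      -- minimizer for μ*
      obtain ⟨us, husP, husEq⟩ := hminstar.1
      -- φ(μ_k)⬝x ≤ μ_k ⬝ us
      have hle : φ (r + Bᵀ *ᵥ lam k) ⬝ᵥ x ≤ (r + Bᵀ *ᵥ lam k) ⬝ᵥ us :=
        hmink.2 ⟨us, husP, rfl⟩
      constructor
      · -- 0 ≤ lam (k+1) ⬝ᵥ x
        obtain ⟨vk, hvk⟩ := hABinv (x, uk) hukP
        have h1 := hsr (x, uk) hukP
        have h2 := (ih _ hvk).1
        rw [hlamrec]
        simp only [add_dotProduct, tdot9] at *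
        rw [hukEq]
        simp only [add_dotProduct, tdot9, dotProduct_add] at *
        linarith
      · -- 0 ≤ (lstar - lam (k+1)) ⬝ᵥ x
        obtain ⟨vs, hvs⟩ := hABinv (x, us) husP
        have h2 := (ih _ hvs).2
        rw [hlamrec]
        have hstar : lstar ⬝ᵥ x = (s + Aᵀ *ᵥ lstar + φ (r + Bᵀ *ᵥ lstar)) ⬝ᵥ x := by
          rw [← hfix]
        rw [sub_dotProduct, hstar]
        simp only [add_dotProduct, tdot9, dotProduct_add, sub_dotProduct] at *
        linarith
  intro k p hp
  exact (key k p hp).2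
end

section
/- Let T be an invertible real N×N matrix and let A : S^N → S^N be the linear map on symmetric matrices that zeros out all entries outside a fixed block-diagonal pattern (A is symmetric: tr(A(X)Y) = tr(X A(Y)), and A is idempotent). Define the cone P = {X ∈ S^N : A(T X T^T) ⪰ 0}. Then the dual cone of P with respect to the trace inner product is P* = {T^T A(Y) T : Y ∈ S^N, Y ⪰ 0}. -/
/-!
Write `W = T⁻ᵀ Z T⁻¹`, so that `⟨Z, X⟩ = ⟨W, T X Tᵀ⟩`; the substitution `S = T X Tᵀ` reduces the
claim to `T = 1`. If `W` is nonnegative on `{S : A S ⪰ 0}`, it is nonnegative on the PSD cone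
(`A` preserves it), hence `W ⪰ 0`. Moreover `M = W - A W` is symmetric with `A M = 0`, so `±M` lie in
the cone and `⟨W, M⟩ = 0`; self-adjointness of `A` gives `⟨A W, M⟩ = ⟨W, A M⟩ = 0`, hence
`⟨M, M⟩ = 0` and `W = A W` lies in `A(PSD)`. The reverse inclusion is `⟨Y, A S⟩ ≥ 0` for `Y, A S ⪰ 0`.
-/

open Matrix

namespace Matrix

variable {n : Type*} [Fintype n]

section RCLike

variable {𝕜 : Type*} [RCLike 𝕜]

open scoped ComplexOrder MatrixOrder

lemma PosSemidef.trace_mul_nonneg_s12 {P Q : Matrix n n 𝕜} (hP : P.PosSemidef)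
    (hQ : Q.PosSemidef) : 0 ≤ (P * Q).trace := by
  classical
  obtain ⟨B, rfl⟩ := CStarAlgebra.nonneg_iff_eq_star_mul_self.mp hQ.nonneg
  rw [star_eq_conjTranspose, ← mul_assoc, trace_mul_comm, ← mul_assoc]
  exact (hP.mul_mul_conjTranspose_same B).trace_nonneg

lemma posSemidef_of_forall_trace_mul_nonneg {W : Matrix n n 𝕜} (hW : W.IsHermitian)
    (h : ∀ S : Matrix n n 𝕜, S.PosSemidef → 0 ≤ (W * S).trace) : W.PosSemidef := by
  refine .of_dotProduct_mulVec_nonneg hW fun x ↦ ?_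
  simpa [mul_vecMulVec, dotProduct_comm] using h _ (posSemidef_vecMulVec_self_star x)

end RCLike

section Congruence

variable {m R : Type*} [CommSemiring R]

lemma IsSymm.transpose_mul_mul {Z : Matrix n n R} (hZ : Z.IsSymm) (U : Matrix n m R) :
    (Uᵀ * Z * U).IsSymm := by
  simp [IsSymm, transpose_mul, hZ.eq, Matrix.mul_assoc]

lemma trace_mul_mul_mul_transpose [Fintype m] (Z : Matrix m m R) (U : Matrix m n R)
    (S : Matrix n n R) :
    (Z * (U * S * Uᵀ)).trace = (Uᵀ * Z * U * S).trace := by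
  rw [← Matrix.mul_assoc, ← Matrix.mul_assoc, trace_mul_comm]
  simp only [Matrix.mul_assoc]

end Congruence

section SelfAdjointProjection

variable {A : Matrix n n ℝ →ₗ[ℝ] Matrix n n ℝ}

lemma map_eq_self_of_forall_trace_mul_nonneg
    (hAsym : ∀ X Y : Matrix n n ℝ, (A X * Y).trace = (X * A Y).trace)
    (hAidem : ∀ X : Matrix n n ℝ, A (A X) = A X)
    (hApsd : ∀ X : Matrix n n ℝ, X.PosSemidef → (A X).PosSemidef)
    {W : Matrix n n ℝ} (hW : W.PosSemidef)
    (hdual : ∀ S : Matrix n n ℝ, S.IsSymm → (A S).PosSemidef → 0 ≤ (W * S).trace) :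
    A W = W := by
  set M := W - A W with hM_def
  have hM : M.IsHermitian := hW.isHermitian.sub (hApsd W hW).isHermitian
  have hAM : A M = 0 := by simp [M, hAidem]
  have hWM : (W * M).trace = 0 := by
    have hpos := hdual M (isHermitian_iff_isSymm.mp hM) (hAM ▸ .zero)
    have hneg := hdual (-M) (isHermitian_iff_isSymm.mp hM).neg
      (by rw [map_neg, hAM, neg_zero]; exact .zero)
    rw [mul_neg, trace_neg] at hneg
    linarith
  have hMM : (Mᴴ * M).trace = 0 := calc
    (Mᴴ * M).trace = (W * M).trace - (A W * M).trace := by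
      rw [hM.eq, hM_def, sub_mul, trace_sub]
    _ = 0 := by rw [hWM, hAsym, hAM, mul_zero, trace_zero, sub_zero]
  exact (sub_eq_zero.mp (trace_conjTranspose_mul_self_eq_zero_iff.mp hMM)).symm

lemma exists_posSemidef_eq_map_of_forall_trace_mul_nonneg
    (hAsym : ∀ X Y : Matrix n n ℝ, (A X * Y).trace = (X * A Y).trace)
    (hAidem : ∀ X : Matrix n n ℝ, A (A X) = A X)
    (hApsd : ∀ X : Matrix n n ℝ, X.PosSemidef → (A X).PosSemidef)
    {W : Matrix n n ℝ} (hW : W.IsSymm)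
    (hdual : ∀ S : Matrix n n ℝ, S.IsSymm → (A S).PosSemidef → 0 ≤ (W * S).trace) :
    ∃ Y : Matrix n n ℝ, Y.PosSemidef ∧ W = A Y := by
  have hWpsd : W.PosSemidef := posSemidef_of_forall_trace_mul_nonneg
    (isHermitian_iff_isSymm.mpr hW) fun S hS ↦
      hdual S (isHermitian_iff_isSymm.mp hS.isHermitian) (hApsd S hS)
  exact ⟨W, hWpsd, (map_eq_self_of_forall_trace_mul_nonneg hAsym hAidem hApsd hWpsd hdual).symm⟩

end SelfAdjointProjection

end Matrix

theorem stmt12_general {N : ℕ} (T : Matrix (Fin N) (Fin N) ℝ) (hT : IsUnit T.det)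
    (A : Matrix (Fin N) (Fin N) ℝ →ₗ[ℝ] Matrix (Fin N) (Fin N) ℝ)
    (hAsym : ∀ X Y : Matrix (Fin N) (Fin N) ℝ, (A X * Y).trace = (X * A Y).trace)
    (hAidem : ∀ X : Matrix (Fin N) (Fin N) ℝ, A (A X) = A X)
    (hApsd : ∀ X : Matrix (Fin N) (Fin N) ℝ, X.PosSemidef → (A X).PosSemidef) :
    {Z : Matrix (Fin N) (Fin N) ℝ | Z.IsSymm ∧
        ∀ X : Matrix (Fin N) (Fin N) ℝ, X.IsSymm → (A (T * X * Tᵀ)).PosSemidef →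
          0 ≤ (Z * X).trace}
      = {Z | ∃ Y : Matrix (Fin N) (Fin N) ℝ, Y.PosSemidef ∧ Z = Tᵀ * A Y * T} := by
  have hTt : IsUnit Tᵀ.det := by rwa [det_transpose]
  ext Z
  constructor
  · rintro ⟨hZ, hdual⟩
    have hWdual : ∀ S : Matrix (Fin N) (Fin N) ℝ, S.IsSymm → (A S).PosSemidef →
        0 ≤ (T⁻¹ᵀ * Z * T⁻¹ * S).trace := by
      intro S hS hAS
      have hTST : T * (T⁻¹ * S * T⁻¹ᵀ) * Tᵀ = S := by
        simp [mul_assoc, transpose_nonsing_inv, mul_nonsing_inv_cancel_left _ _ hT,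
          nonsing_inv_mul _ hTt]
      rw [← trace_mul_mul_mul_transpose]
      exact hdual _ (by simpa using hS.transpose_mul_mul T⁻¹ᵀ) (by rwa [hTST])
    obtain ⟨Y, hY, hWY⟩ := exists_posSemidef_eq_map_of_forall_trace_mul_nonneg hAsym hAidem
      hApsd (hZ.transpose_mul_mul T⁻¹) hWdual
    refine ⟨Y, hY, ?_⟩
    rw [← hWY]
    simp [mul_assoc, transpose_nonsing_inv, mul_nonsing_inv_cancel_left _ _ hTt,
      nonsing_inv_mul _ hT]
  · rintro ⟨Y, hY, rfl⟩
    have hAY : (A Y).IsSymm := isHermitian_iff_isSymm.mp (hApsd Y hY).isHermitian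
    refine ⟨hAY.transpose_mul_mul T, fun X _ hX ↦ ?_⟩
    rw [← trace_mul_mul_mul_transpose, hAsym]
    exact hY.trace_mul_nonneg_s12 hX

/-- for an invertible `T` and a self-adjoint idempotent
positivity-preserving projection `A` onto block-diagonal symmetric matrices, the cone
`P = {X symmetric : A(T X Tᵀ) ⪰ 0}` has dual cone (w.r.t. the trace inner product on
symmetric matrices) `P* = {Tᵀ A(Y) T : Y ⪰ 0}`. -/
theorem stmt12 {N : ℕ} (T : Matrix (Fin N) (Fin N) ℝ) (hT : IsUnit T.det)
    (A : Matrix (Fin N) (Fin N) ℝ →ₗ[ℝ] Matrix (Fin N) (Fin N) ℝ)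
    (hAsym : ∀ X Y : Matrix (Fin N) (Fin N) ℝ, (A X * Y).trace = (X * A Y).trace)
    (hAidem : ∀ X : Matrix (Fin N) (Fin N) ℝ, A (A X) = A X)
    (hApsd : ∀ X : Matrix (Fin N) (Fin N) ℝ, X.PosSemidef → (A X).PosSemidef)
    (hAsymm : ∀ X : Matrix (Fin N) (Fin N) ℝ, X.IsSymm → (A X).IsSymm) :
    {Z : Matrix (Fin N) (Fin N) ℝ | Z.IsSymm ∧
        ∀ X : Matrix (Fin N) (Fin N) ℝ, X.IsSymm → (A (T * X * Tᵀ)).PosSemidef →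
          0 ≤ (Z * X).trace}
      = {Z | ∃ Y : Matrix (Fin N) (Fin N) ℝ, Y.PosSemidef ∧ Z = Tᵀ * A Y * T} :=
  stmt12_general T hT A hAsym hAidem hApsd
end
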